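/- Let a>0, c>0, N>0 and let n≥1 be an integer. Assume p_{n−1}, q_{n−1} exist for the weight ω_{n−1,N} and p_n, q_n exist for the weight ω_{n,N}, and that γ_n := q_n(0) ≠ 0. Then for every z ∈ ℂ one has z·p_{n−1}(z) = p_n(z) − (p_n(0)/q_n(0))·q_n(z); that is, p_{n−1}(z) = (1/z)·( p_n(z) − (α_n/γ_n)·q_n(z) ) with α_n := p_n(0). -/

import Mathlib

/-- The contour weight `ω_{n,N}(w) = w^{-n} e^{-Naw} exp(Nc Log(1-a/w))`. -/
noncomputable def omegaW (a c N : ℝ) (n : ℕ) (w : ℂ) : ℂ :=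
  w ^ (-(n : ℤ)) * Complex.exp (-((N * a : ℝ) : ℂ) * w)
    * Complex.exp (((N * c : ℝ) : ℂ) * Complex.log (1 - (a : ℂ) / w))

/-- `P` is the monic degree-`n` orthogonal polynomial for the weight `ω_{n,N}`
on the circle `|w| = R`. -/
def IsPn (a c N R : ℝ) (n : ℕ) (P : Polynomial ℂ) : Prop :=
  P.Monic ∧ P.natDegree = n ∧
    ∀ k : ℕ, k < n →
      circleIntegral (fun w => P.eval w * w ^ k * omegaW a c N n w) 0 R = 0

/-- `Q` is the second-kind polynomial of degree `≤ n-1` for the weight `ω_{n,N}`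
on the circle `|w| = R`. -/
def IsQn (a c N R : ℝ) (n : ℕ) (Q : Polynomial ℂ) : Prop :=
  Q.degree < (n : WithBot ℕ) ∧
    (∀ k : ℕ, k + 1 < n →
      circleIntegral (fun w => Q.eval w * w ^ k * omegaW a c N n w) 0 R = 0) ∧
    (-1 / (2 * (Real.pi : ℂ) * Complex.I))
      * circleIntegral (fun w => Q.eval w * w ^ ((n : ℤ) - 1) * omegaW a c N n w) 0 R = 1

/-!
Write `L_j(P) = ∮_{|w|=R} P(w) ω_{j,N}(w) dw`. Since `w ω_{j+1,N}(w) = ω_{j,N}(w)`, we have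
`L_{j+1}(X P) = L_j(P)`. The polynomial `D = X p_{n-1} - p_n + (p_n(0)/q_n(0)) q_n` has degree
`< n`, vanishes at `0` and is `L_n`-orthogonal to all polynomials of degree `< n-1`, so `D = X D'`
where `D'` has degree `< n-1` and lies in the kernel of the Hankel form `(f, g) ↦ L_{n-1}(f g)` on
polynomials of degree `< n-1`. That form is nondegenerate as soon as `p_{n-1}` and `q_{n-1}` exist:
pairing a kernel element `d` with `q_{n-1}` kills its top coefficient, and then pairing with
`p_{n-1}` shows that `X d` is again in the kernel; iterating forces `d = 0`.
-/

open Polynomial Metric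

namespace Polynomial

variable {K : Type*} [Field K]

theorem X_pow_mul_mem_degreeLT_iff {f : K[X]} {n i : ℕ} :
    X ^ i * f ∈ degreeLT K (n + i) ↔ f ∈ degreeLT K n := by
  rw [mem_degreeLT, mem_degreeLT, mul_comm, degree_mul_X_pow, Nat.cast_add]
  exact WithBot.add_lt_add_iff_right (WithBot.natCast_ne_bot i)

theorem X_mul_mem_degreeLT_iff {f : K[X]} {n : ℕ} :
    X * f ∈ degreeLT K (n + 1) ↔ f ∈ degreeLT K n := by
  simpa using X_pow_mul_mem_degreeLT_iff (f := f) (n := n) (i := 1)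

theorem Monic.sub_mem_degreeLT {p q : K[X]} (hp : p.Monic) (hq : q.Monic)
    (h : p.natDegree = q.natDegree) : p - q ∈ degreeLT K p.natDegree := by
  rw [mem_degreeLT, ← degree_eq_natDegree hp.ne_zero]
  refine degree_sub_lt_left ?_ hp.ne_zero (by rw [hp.leadingCoeff, hq.leadingCoeff])
  rw [degree_eq_natDegree hp.ne_zero, degree_eq_natDegree hq.ne_zero, h]

theorem exists_sub_smul_mem_degreeLT {p f : K[X]} (hp : p.Monic)
    (hf : f ∈ degreeLT K (p.natDegree + 1)) :
    ∃ c : K, f - c • p ∈ degreeLT K p.natDegree := by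
  refine ⟨(f /ₘ p).coeff 0, ?_⟩
  have hquot : f /ₘ p = C ((f /ₘ p).coeff 0) := by
    refine eq_C_of_natDegree_eq_zero ?_
    rw [degreeLT_succ_eq_degreeLE, mem_degreeLE, ← natDegree_le_iff_degree_le] at hf
    rw [natDegree_divByMonic f hp]
    omega
  rw [smul_eq_C_mul, ← hquot, mul_comm, ← modByMonic_eq_sub_mul_div f p, mem_degreeLT,
    ← degree_eq_natDegree hp.ne_zero]
  exact degree_modByMonic_lt f hp

variable (L : K[X] →ₗ[K] K)

def orthDegreeLT (n : ℕ) : Submodule K K[X] where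
  carrier := {f | ∀ g ∈ degreeLT K n, L (f * g) = 0}
  add_mem' hf hf' g hg := by simp [add_mul, hf g hg, hf' g hg]
  zero_mem' g _ := by simp
  smul_mem' c f hf g hg := by simp [hf g hg]

variable {L}

theorem mem_orthDegreeLT {f : K[X]} {n : ℕ} :
    f ∈ orthDegreeLT L n ↔ ∀ g ∈ degreeLT K n, L (f * g) = 0 :=
  Iff.rfl

theorem mem_orthDegreeLT_iff_X_pow {f : K[X]} {n : ℕ} :
    f ∈ orthDegreeLT L n ↔ ∀ k < n, L (f * X ^ k) = 0 := by
  classical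
  refine ⟨fun h k hk => h _ (mem_degreeLT.2 (by simpa using hk)), fun h g hg => ?_⟩
  suffices degreeLT K n ≤ LinearMap.ker (L ∘ₗ LinearMap.mulLeft K f) from this hg
  rw [degreeLT_eq_span_X_pow, Submodule.span_le, Finset.coe_image, Set.image_subset_iff]
  intro k hk
  simpa using h k (by simpa using hk)

theorem orthDegreeLT_antitone : Antitone (orthDegreeLT L) :=
  fun _ _ hmn _ hf g hg => hf g (degreeLT_mono hmn hg)

theorem X_mul_mem_orthDegreeLT_iff {L' : K[X] →ₗ[K] K} (hL : ∀ f, L' (X * f) = L f)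
    {f : K[X]} {n : ℕ} : X * f ∈ orthDegreeLT L' n ↔ f ∈ orthDegreeLT L n := by
  simp only [mem_orthDegreeLT, mul_assoc, hL]

theorem mem_degreeLT_of_mem_orthDegreeLT {q d : K[X]} {j : ℕ}
    (hq : q ∈ degreeLT K (j + 1)) (hqo : q ∈ orthDegreeLT L j) (hqj : L (q * X ^ j) ≠ 0)
    (hd : d ∈ degreeLT K (j + 1)) (hdo : d ∈ orthDegreeLT L (j + 1)) : d ∈ degreeLT K j := by
  obtain ⟨c, hc⟩ :=
    exists_sub_smul_mem_degreeLT (monic_X_pow j) (by rwa [natDegree_X_pow (R := K)])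
  rw [natDegree_X_pow (R := K)] at hc
  have hc0 : c * L (q * X ^ j) = 0 :=
    calc c * L (q * X ^ j) = L (d * q) - L (q * (d - c • X ^ j)) := by
          simp only [mul_sub, mul_smul_comm, map_sub, map_smul, smul_eq_mul, mul_comm d]; ring
      _ = 0 := by rw [hdo q hq, hqo _ hc, sub_zero]
  obtain rfl : c = 0 := (mul_eq_zero.1 hc0).resolve_right hqj
  simpa using hc

theorem X_mul_mem_orthDegreeLT {p d : K[X]} {j : ℕ} (hp : p.Monic) (hpdeg : p.natDegree = j + 1)
    (hpo : p ∈ orthDegreeLT L (j + 1)) (hd : d ∈ degreeLT K j)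
    (hdo : d ∈ orthDegreeLT L (j + 1)) : X * d ∈ orthDegreeLT L (j + 1) := by
  intro g hg
  obtain ⟨c, hc⟩ := exists_sub_smul_mem_degreeLT hp (f := X * g)
    (by rw [hpdeg]; exact X_mul_mem_degreeLT_iff.2 hg)
  rw [hpdeg] at hc
  calc L (X * d * g) = c * L (p * d) + L (d * (X * g - c • p)) := by
        rw [mul_sub, mul_smul_comm, map_sub, map_smul, smul_eq_mul, mul_comm p d, mul_right_comm,
          mul_comm (X * g) d]
        ring
    _ = 0 := by rw [hpo d (degreeLT_mono j.le_succ hd), hdo _ hc, mul_zero, add_zero]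

theorem eq_zero_of_mem_orthDegreeLT {p q d : K[X]} {j : ℕ} (hp : p.Monic)
    (hpdeg : p.natDegree = j + 1) (hpo : p ∈ orthDegreeLT L (j + 1))
    (hq : q ∈ degreeLT K (j + 1)) (hqo : q ∈ orthDegreeLT L j) (hqj : L (q * X ^ j) ≠ 0)
    (hd : d ∈ degreeLT K (j + 1)) (hdo : d ∈ orthDegreeLT L (j + 1)) : d = 0 := by
  have key (i : ℕ) :
      X ^ i * d ∈ degreeLT K (j + 1) ∧ X ^ i * d ∈ orthDegreeLT L (j + 1) := by
    induction i with
    | zero => simpa using ⟨hd, hdo⟩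
    | succ i ih =>
      have hlow := mem_degreeLT_of_mem_orthDegreeLT hq hqo hqj ih.1 ih.2
      rw [pow_succ', mul_assoc]
      exact ⟨X_mul_mem_degreeLT_iff.2 hlow, X_mul_mem_orthDegreeLT hp hpdeg hpo hlow ih.2⟩
  have h0 : d ∈ degreeLT K 0 := X_pow_mul_mem_degreeLT_iff.1 (by simpa using (key (j + 1)).1)
  simpa [mem_degreeLT] using h0

end Polynomial

section CircleMoment

noncomputable def circleMoment (ω : ℂ → ℂ) (R : ℝ) (hω : ContinuousOn ω (sphere 0 |R|)) :
    ℂ[X] →ₗ[ℂ] ℂ where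
  toFun P := ∮ w in C(0, R), P.eval w * ω w
  map_add' P Q := by
    simp only [eval_add, add_mul]
    exact circleIntegral.integral_add (P.continuous.continuousOn.mul hω).circleIntegrable'
      (Q.continuous.continuousOn.mul hω).circleIntegrable'
  map_smul' c P := by
    simp only [eval_smul, smul_eq_mul, mul_assoc, circleIntegral.integral_const_mul,
      RingHom.id_apply]

variable {ω ω' : ℂ → ℂ} {R : ℝ} (hω : ContinuousOn ω (sphere 0 |R|))

theorem circleMoment_mul_X_pow (P : ℂ[X]) (k : ℕ) :
    circleMoment ω R hω (P * X ^ k) = ∮ w in C(0, R), P.eval w * w ^ k * ω w := by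
  simp [circleMoment]

theorem circleMoment_X_mul (hω' : ContinuousOn ω' (sphere 0 |R|))
    (h : ∀ w ∈ sphere (0 : ℂ) |R|, w * ω' w = ω w) (P : ℂ[X]) :
    circleMoment ω' R hω' (X * P) = circleMoment ω R hω P := by
  simp only [circleMoment, LinearMap.coe_mk, AddHom.coe_mk, circleIntegral]
  refine intervalIntegral.integral_congr fun θ _ => ?_
  simp only [eval_mul, eval_X, mul_assoc, mul_left_comm _ (eval _ P),
    h _ (circleMap_mem_sphere' 0 R θ)]

end CircleMoment

section Weight

variable {a c N : ℝ} {n : ℕ}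

theorem continuousOn_omegaW : ContinuousOn (omegaW a c N n) {w | |a| < ‖w‖} := by
  refine fun w (hw : |a| < ‖w‖) => ContinuousAt.continuousWithinAt ?_
  have hw0 : w ≠ 0 := norm_pos_iff.1 ((abs_nonneg a).trans_lt hw)
  have hslit : 1 - (a : ℂ) / w ∈ Complex.slitPlane := by
    rw [sub_eq_add_neg]
    refine Complex.mem_slitPlane_of_norm_lt_one ?_
    rw [norm_neg, norm_div, Complex.norm_real, Real.norm_eq_abs, div_lt_one (by positivity)]
    exact hw
  unfold omegaW
  exact ((continuousAt_zpow₀ w _ (Or.inl hw0)).mul (by fun_prop)).mul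
    (Complex.continuous_exp.continuousAt.comp (continuousAt_const.mul
      ((continuousAt_const.sub (continuousAt_const.div continuousAt_id hw0)).clog hslit)))

theorem mul_omegaW_succ {w : ℂ} (hw : w ≠ 0) :
    w * omegaW a c N (n + 1) w = omegaW a c N n w := by
  simp only [omegaW, Nat.cast_succ, neg_add, zpow_add₀ hw, zpow_neg_one]
  field_simp

end Weight

section Moments

variable {a c N R : ℝ} {n j : ℕ} {P Q : ℂ[X]}

theorem IsPn.mem_orthDegreeLT (h : IsPn a c N R n P)
    (hω : ContinuousOn (omegaW a c N n) (sphere 0 |R|)) :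
    P ∈ orthDegreeLT (circleMoment (omegaW a c N n) R hω) n :=
  mem_orthDegreeLT_iff_X_pow.2 fun k hk => (circleMoment_mul_X_pow hω P k).trans (h.2.2 k hk)

theorem IsQn.mem_degreeLT (h : IsQn a c N R n Q) : Q ∈ degreeLT ℂ n :=
  Polynomial.mem_degreeLT.2 h.1

theorem IsQn.mem_orthDegreeLT (h : IsQn a c N R (j + 1) Q)
    (hω : ContinuousOn (omegaW a c N (j + 1)) (sphere 0 |R|)) :
    Q ∈ orthDegreeLT (circleMoment (omegaW a c N (j + 1)) R hω) j :=
  mem_orthDegreeLT_iff_X_pow.2 fun k hk =>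
    (circleMoment_mul_X_pow hω Q k).trans (h.2.1 k (by omega))

theorem IsQn.circleMoment_ne_zero (h : IsQn a c N R (j + 1) Q)
    (hω : ContinuousOn (omegaW a c N (j + 1)) (sphere 0 |R|)) :
    circleMoment (omegaW a c N (j + 1)) R hω (Q * X ^ j) ≠ 0 := by
  intro h0
  have hnorm := h.2.2
  simp only [Nat.cast_succ, add_sub_cancel_right, zpow_natCast] at hnorm
  rw [← circleMoment_mul_X_pow hω, h0, mul_zero] at hnorm
  exact zero_ne_one hnorm

theorem not_isQn_zero : ¬ IsQn a c N R 0 Q := by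
  intro h
  obtain rfl : Q = 0 := by simpa [Polynomial.mem_degreeLT] using h.mem_degreeLT
  simpa [circleIntegral] using h.2.2

theorem continuousOn_omegaW_sphere (h : |a| < |R|) :
    ContinuousOn (omegaW a c N n) (sphere 0 |R|) :=
  continuousOn_omegaW.mono fun w hw => by rwa [Set.mem_ofPred_eq, mem_sphere_zero_iff_norm.1 hw]

theorem circleMoment_omegaW_X_mul (hR : R ≠ 0)
    (hω : ContinuousOn (omegaW a c N n) (sphere 0 |R|))
    (hω' : ContinuousOn (omegaW a c N (n + 1)) (sphere 0 |R|)) (P : ℂ[X]) :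
    circleMoment _ R hω' (X * P) = circleMoment _ R hω P :=
  circleMoment_X_mul hω hω'
    (fun w hw => mul_omegaW_succ (ne_zero_of_mem_sphere (abs_ne_zero.2 hR) ⟨w, hw⟩)) P

end Moments

theorem statement1_general
    (a c N R : ℝ) (ha : 0 < a) (hR : a < R)
    (n : ℕ)
    (pm qm pn qn : Polynomial ℂ)
    (hpm : IsPn a c N R (n - 1) pm) (hqm : IsQn a c N R (n - 1) qm)
    (hpn : IsPn a c N R n pn) (hqn : IsQn a c N R n qn)
    (hγ : qn.eval 0 ≠ 0) :
    ∀ z : ℂ, z * pm.eval z = pn.eval z - (pn.eval 0 / qn.eval 0) * qn.eval z := by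
  obtain ⟨j, rfl⟩ : ∃ j, n = j + 2 := by
    rcases n with _ | _ | j
    exacts [(not_isQn_zero hqm).elim, (not_isQn_zero hqm).elim, ⟨j, rfl⟩]
  rw [show j + 2 - 1 = j + 1 by omega] at hpm hqm
  have hω (i : ℕ) : ContinuousOn (omegaW a c N i) (sphere 0 |R|) :=
    continuousOn_omegaW_sphere (by rwa [abs_of_pos ha, abs_of_pos (ha.trans hR)])
  have hshift (P : ℂ[X]) :
      circleMoment _ R (hω (j + 2)) (X * P) = circleMoment _ R (hω (j + 1)) P :=
    circleMoment_omegaW_X_mul (ha.trans hR).ne' _ _ P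
  set D := X * pm - pn + (pn.eval 0 / qn.eval 0) • qn
  obtain ⟨D', hD'⟩ : X ∣ D := X_dvd_iff.2 (by simp [D, coeff_zero_eq_eval_zero, hγ])
  have hDdeg : D ∈ degreeLT ℂ (j + 2) := by
    have hXpm : (X * pm).natDegree = j + 2 := by rw [natDegree_X_mul hpm.1.ne_zero, hpm.2.1]
    refine add_mem ?_ (Submodule.smul_mem _ _ hqn.mem_degreeLT)
    simpa [hXpm] using (monic_X.mul hpm.1).sub_mem_degreeLT hpn.1 (hXpm.trans hpn.2.1.symm)
  have hDorth : D ∈ orthDegreeLT (circleMoment _ R (hω (j + 2))) (j + 1) := by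
    refine add_mem (sub_mem ?_ (orthDegreeLT_antitone (j + 1).le_succ (hpn.mem_orthDegreeLT _)))
      (Submodule.smul_mem _ _ (hqn.mem_orthDegreeLT _))
    exact (X_mul_mem_orthDegreeLT_iff hshift).2 (hpm.mem_orthDegreeLT _)
  rw [hD'] at hDdeg hDorth
  have hD'0 : D' = 0 := eq_zero_of_mem_orthDegreeLT hpm.1 hpm.2.1 (hpm.mem_orthDegreeLT _)
    hqm.mem_degreeLT (hqm.mem_orthDegreeLT _) (hqm.circleMoment_ne_zero _)
    (X_mul_mem_degreeLT_iff.1 hDdeg) ((X_mul_mem_orthDegreeLT_iff hshift).1 hDorth)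
  intro z
  have hz := congrArg (eval z) hD'
  simp only [D, hD'0, mul_zero, eval_add, eval_sub, eval_mul, eval_X, eval_smul, smul_eq_mul,
    eval_zero] at hz
  linear_combination hz

/-- `z p_{n-1}(z) = p_n(z) - (p_n(0)/q_n(0)) q_n(z)`. -/
theorem statement1
    (a c N R : ℝ) (ha : 0 < a) (hc : 0 < c) (hN : 0 < N) (hR : a < R)
    (n : ℕ) (hn : 1 ≤ n)
    (pm qm pn qn : Polynomial ℂ)
    (hpm : IsPn a c N R (n - 1) pm) (hqm : IsQn a c N R (n - 1) qm)
    (hpn : IsPn a c N R n pn) (hqn : IsQn a c N R n qn)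
    (hγ : qn.eval 0 ≠ 0) :
    ∀ z : ℂ, z * pm.eval z = pn.eval z - (pn.eval 0 / qn.eval 0) * qn.eval z :=
  statement1_general a c N R ha hR n pm qm pn qn hpm hqm hpn hqn hγ
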